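/- arXiv:1911.10430 — 3 statements merged into one kernel-verified Lean document; each statement's English description precedes it below -/
import Mathlib

section
/- For nonnegative integers p, q and a positive integer M, the product of binomial coefficients binom(M+p-1, p) * binom(M+q-1, q) equals the alternating sum over j from 0 to p of (-1)^j * binom(p, j) * binom(p+q-j, p) * binom(M+p+q-j-1, p+q-j). -/
open MvPolynomial Finset Equiv

attribute [local instance] Classical.propDecidable

noncomputable section

/-! ### Type A fundamental quasisymmetric functions -/

/-- A weakly increasing sequence of length `n` in `[M]` with strict increases at
positions in `I` (positions are 1-indexed: `k ∈ I` forces strictness between the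
`k`-th and `(k+1)`-st entries, i.e. between 0-indexed entries `k-1` and `k`). -/
def seqOK (n M : ℕ) (I : Finset ℕ) (g : Fin n → Fin M) : Prop :=
  ∀ i j : Fin n, (i : ℕ) + 1 = (j : ℕ) → (g i ≤ g j ∧ ((j : ℕ) ∈ I → g i < g j))

/-- Gessel's fundamental quasisymmetric function `F_I` on the alphabet `x_1,…,x_M`. -/
def Fqsym (M n : ℕ) (I : Finset ℕ) : MvPolynomial (Fin M) ℤ :=
  ∑ g ∈ Finset.univ.filter (seqOK n M I), ∏ i, X (g i)

/-- Descent set of a permutation written as the word `π(1) … π(n)`: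
`k` is a descent iff `π(k) > π(k+1)` (1-indexed values, `k ∈ [1, n-1]`). -/
def desPerm {n : ℕ} (α : Equiv.Perm (Fin n)) : Finset ℕ :=
  (Finset.range n).filter fun k =>
    ∃ i j : Fin n, (i : ℕ) + 1 = (j : ℕ) ∧ (j : ℕ) = k ∧ α j < α i

/-- `γ` is a shuffle of the word `α` with the word `β` shifted up by `n`. -/
def IsShuffle {n m : ℕ} (α : Equiv.Perm (Fin n)) (β : Equiv.Perm (Fin m))
    (γ : Equiv.Perm (Fin (n + m))) : Prop :=
  ∃ φ : Fin n → Fin (n + m), ∃ ψ : Fin m → Fin (n + m),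
    (∀ a b : Fin n, a < b → φ a < φ b) ∧
    (∀ a b : Fin m, a < b → ψ a < ψ b) ∧
    (∀ i, (γ (φ i) : ℕ) = (α i : ℕ)) ∧
    (∀ j, (γ (ψ j) : ℕ) = n + (β j : ℕ)) ∧
    (∀ k, (∃ i, φ i = k) ∨ (∃ j, ψ j = k))

/-! ### Young tableaux -/

/-- Semistandard Young tableau of shape `μ` with entries in `Fin M`. -/
def IsSSYT {μ : YoungDiagram} {M : ℕ} (f : ↥μ.cells → Fin M) : Prop :=
  (∀ c d : ↥μ.cells, (c : ℕ × ℕ).1 = (d : ℕ × ℕ).1 → (c : ℕ × ℕ).2 ≤ (d : ℕ × ℕ).2 →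
      f c ≤ f d) ∧
  (∀ c d : ↥μ.cells, (c : ℕ × ℕ).2 = (d : ℕ × ℕ).2 → (c : ℕ × ℕ).1 < (d : ℕ × ℕ).1 →
      f c < f d)

/-- The Schur polynomial in `M` variables: generating function of SSYT of shape `μ`. -/
def schurPoly (M : ℕ) (μ : YoungDiagram) : MvPolynomial (Fin M) ℤ :=
  ∑ f ∈ Finset.univ.filter (fun f : ↥μ.cells → Fin M => IsSSYT f), ∏ c, X (f c)

/-- Standard Young tableau of shape `μ` (with `μ.card = n`), labels `Fin n`. -/
def IsSYT {μ : YoungDiagram} {n : ℕ} (f : ↥μ.cells → Fin n) : Prop :=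
  Function.Bijective f ∧
  (∀ c d : ↥μ.cells, (c : ℕ × ℕ).1 = (d : ℕ × ℕ).1 → (c : ℕ × ℕ).2 < (d : ℕ × ℕ).2 →
      f c < f d) ∧
  (∀ c d : ↥μ.cells, (c : ℕ × ℕ).2 = (d : ℕ × ℕ).2 → (c : ℕ × ℕ).1 < (d : ℕ × ℕ).1 →
      f c < f d)

/-- Descent set of a standard Young tableau: `k` is a descent iff the label `k+1`
(1-indexed) lies in a strictly lower row than the label `k`. -/
def desSYT {μ : YoungDiagram} {n : ℕ} (f : ↥μ.cells → Fin n) : Finset ℕ :=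
  (Finset.range n).filter fun k =>
    ∃ c d : ↥μ.cells, (f c : ℕ) + 1 = k ∧ (f d : ℕ) = k ∧ (c : ℕ × ℕ).1 < (d : ℕ × ℕ).1

/-- `g` is the standardization of the semistandard tableau `f` (ties among equal
entries broken from left to right, i.e. by column). -/
def Standardizes {μ : YoungDiagram} {M n : ℕ} (f : ↥μ.cells → Fin M)
    (g : ↥μ.cells → Fin n) : Prop :=
  ∀ c d : ↥μ.cells,
    g c < g d ↔ (f c < f d ∨ (f c = f d ∧ (c : ℕ × ℕ).2 < (d : ℕ × ℕ).2))

/-! ### Weak composition quasisymmetric functions -/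

/-- Expansion of a weak composition into "slots": each zero part contributes one
slot of exponent `0`, each positive part `s` contributes `s` slots of exponent `1`. -/
def wcSlots (α : List ℕ) : List ℕ :=
  α.flatMap fun s => if s = 0 then [0] else List.replicate s 1

def wcDesAux : List ℕ → ℕ → List ℕ
  | [], _ => []
  | s :: rest, c => if s = 0 then wcDesAux rest (c + 1) else (c + s) :: wcDesAux rest (c + s)

/-- The descent set `D(α)` of a weak composition `α`. -/
def wcDes (α : List ℕ) : Finset ℕ := (wcDesAux α 0).toFinset

/-- The weak composition fundamental quasisymmetric function `F̃_α` on `x_1,…,x_M`. -/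
def wcF (M : ℕ) (α : List ℕ) : MvPolynomial (Fin M) ℤ :=
  ∑ g ∈ Finset.univ.filter (seqOK (wcSlots α).length M (wcDes α)),
    ∏ t : Fin (wcSlots α).length, X (g t) ^ (wcSlots α).get t

/-! ### Coloured permutations -/

/-- Order key for a coloured letter: overlined letters `(true, v)` come first
(ordered by value), then non-overlined letters `(false, v)`. -/
def cOrd (L : ℕ) (x : Bool × ℕ) : ℕ := if x.1 then x.2 else 2 * L + x.2

/-- Generating function `Γ(π)` of `P_π`-partitions for a coloured permutation,
given as a word `w` of letters `(overlined?, value)`. -/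
def GammaC (M : ℕ) (w : List (Bool × ℕ)) : MvPolynomial (Fin M) ℤ :=
  ∑ f ∈ Finset.univ.filter (fun f : Fin w.length → Fin M =>
      ∀ i j : Fin w.length, (i : ℕ) + 1 = (j : ℕ) →
        (f i ≤ f j ∧ (cOrd w.length (w.get j) < cOrd w.length (w.get i) → f i < f j))),
    ∏ i, X (f i) ^ (if (w.get i).1 then 0 else 1)

/-- The weak composition `comp(π)` of a coloured permutation word: overlined letters
give zero parts, maximal increasing runs of non-overlined letters give positive parts. -/
def compC : List (Bool × ℕ) → List ℕ
  | [] => []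
  | (true, _) :: rest => 0 :: compC rest
  | (false, v) :: rest =>
    match rest with
    | (false, w) :: _ =>
      if v < w then
        match compC rest with
        | [] => [1]
        | s :: t => (s + 1) :: t
      else 1 :: compC rest
    | _ => 1 :: compC rest

/-! ### Standard and semistandard (p)-tableaux -/

/-- Standard `(p)`-tableau of shape `((p), μ)` with `μ.card = n`: a strictly
increasing row `a` of length `p` and a standard filling `f` of `μ`, jointly
bijective onto `[n+p]`. -/
def IsSBT {μ : YoungDiagram} {p n : ℕ} (a : Fin p → Fin (n + p))
    (f : ↥μ.cells → Fin (n + p)) : Prop :=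
  (∀ i j : Fin p, i < j → a i < a j) ∧
  Function.Injective f ∧
  (∀ (i : Fin p) (c : ↥μ.cells), a i ≠ f c) ∧
  (∀ c d : ↥μ.cells, (c : ℕ × ℕ).1 = (d : ℕ × ℕ).1 → (c : ℕ × ℕ).2 < (d : ℕ × ℕ).2 →
      f c < f d) ∧
  (∀ c d : ↥μ.cells, (c : ℕ × ℕ).2 = (d : ℕ × ℕ).2 → (c : ℕ × ℕ).1 < (d : ℕ × ℕ).1 →
      f c < f d)

/-- Row of the cell of `T⁺` labelled `t` (junk value `0` if `t` labels `T⁻`). -/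
def rowOfLabel {μ : YoungDiagram} {N : ℕ} (f : ↥μ.cells → Fin N) (t : ℕ) : ℕ :=
  ∑ c ∈ Finset.univ.filter (fun c : ↥μ.cells => (f c : ℕ) = t), (c : ℕ × ℕ).1

/-- Slot list of a standard `(p)`-tableau: for each label `t = 0,…,n+p-1`, `none`
if `t` lies in `T⁻`, and `some r` if `t` lies in row `r` of `T⁺`. -/
def slotsSBT {μ : YoungDiagram} {p n : ℕ} (a : Fin p → Fin (n + p))
    (f : ↥μ.cells → Fin (n + p)) : List (Option ℕ) :=
  (List.range (n + p)).map fun t =>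
    if ∃ i : Fin p, (a i : ℕ) = t then none else some (rowOfLabel f t)

/-- Parse a slot list into a weak composition: `none` slots give zero parts,
maximal runs of `some` slots with no descent (no row increase) give positive parts. -/
def compOfSlots : List (Option ℕ) → List ℕ
  | [] => []
  | none :: rest => 0 :: compOfSlots rest
  | some r :: rest =>
    match rest with
    | some r' :: _ =>
      if r < r' then 1 :: compOfSlots rest
      else
        match compOfSlots rest with
        | [] => [1]
        | s :: t => (s + 1) :: t
    | _ => 1 :: compOfSlots rest

/-- The weak composition `comp(T)` of a standard `(p)`-tableau `T = (a, f)`. -/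
def compSBT {μ : YoungDiagram} {p n : ℕ} (a : Fin p → Fin (n + p))
    (f : ↥μ.cells → Fin (n + p)) : List ℕ :=
  compOfSlots (slotsSBT a f)

/-- `(a, b)` (standard) is the standardization of the semistandard `(p)`-tableau
`(g, f)`: order is preserved, ties broken by relabelling `T⁻` first, and within
each tableau from left to right. -/
def StdSBT {μ : YoungDiagram} {M p n : ℕ} (g : Fin p → Fin M) (f : ↥μ.cells → Fin M)
    (a : Fin p → Fin (n + p)) (b : ↥μ.cells → Fin (n + p)) : Prop :=
  (∀ i j : Fin p, a i < a j ↔ (g i < g j ∨ (g i = g j ∧ i < j))) ∧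
  (∀ c d : ↥μ.cells, b c < b d ↔ (f c < f d ∨ (f c = f d ∧ (c : ℕ × ℕ).2 < (d : ℕ × ℕ).2))) ∧
  (∀ (i : Fin p) (c : ↥μ.cells), a i < b c ↔ g i ≤ f c) ∧
  (∀ (c : ↥μ.cells) (i : Fin p), b c < a i ↔ f c < g i)

/-! ### Chow's type B quasisymmetric functions and signed permutations -/

/-- Type B admissible sequence: `0 = i_0 ≤ i_1 ≤ … ≤ i_n` with `i_j < i_{j+1}`
for `j ∈ I` (the alphabet is `x_0, x_1, …, x_M`, i.e. `Fin (M+1)`). -/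
def seqOKB (n : ℕ) {M : ℕ} (I : Finset ℕ) (g : Fin n → Fin (M + 1)) : Prop :=
  (∀ i j : Fin n, (i : ℕ) + 1 = (j : ℕ) → (g i ≤ g j ∧ ((j : ℕ) ∈ I → g i < g j))) ∧
  (∀ j : Fin n, (j : ℕ) = 0 → (0 : ℕ) ∈ I → (0 : Fin (M + 1)) < g j)

/-- Chow's type B fundamental quasisymmetric function `F^B_I`, with variables
embedded into an ambient variable set via `v`. -/
def FB (R : Type*) [CommRing R] {σ : Type*} (M n : ℕ) (I : Finset ℕ)
    (v : Fin (M + 1) → σ) : MvPolynomial σ R :=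
  ∑ g ∈ Finset.univ.filter (seqOKB n I), ∏ i, X (v (g i))

/-- A signed permutation of `[n]`: an (unsigned) permutation together with signs. -/
abbrev SPerm (n : ℕ) := Equiv.Perm (Fin n) × (Fin n → Bool)

/-- The value `π(i) ∈ ±[n]` of a signed permutation at position `i`. -/
def sval {n : ℕ} (π : SPerm n) (i : Fin n) : ℤ :=
  if π.2 i then -((π.1 i : ℤ) + 1) else (π.1 i : ℤ) + 1

/-- Type B descent set: `0` is a descent iff `π(1) < 0`; `k ≥ 1` is a descent iff
`π(k) > π(k+1)`. -/
def desB {n : ℕ} (π : SPerm n) : Finset ℕ :=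
  (Finset.range n).filter fun k =>
    (k = 0 ∧ ∃ j : Fin n, (j : ℕ) = 0 ∧ sval π j < 0) ∨
    (∃ i j : Fin n, (i : ℕ) + 1 = (j : ℕ) ∧ (j : ℕ) = k ∧ sval π j < sval π i)

/-- Total colour: the number of negative values. -/
def tcB {n : ℕ} (π : SPerm n) : ℕ := (Finset.univ.filter fun i => π.2 i).card

/-- The inverse of a signed permutation. -/
def invB {n : ℕ} (π : SPerm n) : SPerm n := (π.1⁻¹, fun j => π.2 (π.1⁻¹ j))

/-- Signed shuffle: `γ` is obtained by interleaving `α` with `β` whose letters'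
absolute values are shifted by `n` (signs preserved). -/
def IsShuffleB {n m : ℕ} (α : SPerm n) (β : SPerm m) (γ : SPerm (n + m)) : Prop :=
  ∃ φ : Fin n → Fin (n + m), ∃ ψ : Fin m → Fin (n + m),
    (∀ a b : Fin n, a < b → φ a < φ b) ∧
    (∀ a b : Fin m, a < b → ψ a < ψ b) ∧
    (∀ i, sval γ (φ i) = sval α i) ∧
    (∀ j, sval γ (ψ j) = sval β j + (if 0 < sval β j then (n : ℤ) else -(n : ℤ))) ∧
    (∀ k, (∃ i, φ i = k) ∨ (∃ j, ψ j = k))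

/-! ### Domino tableaux -/

/-- Two cells are adjacent (horizontally or vertically). -/
def AdjCell (c d : ℕ × ℕ) : Prop :=
  (c.1 = d.1 ∧ (c.2 + 1 = d.2 ∨ d.2 + 1 = c.2)) ∨
  (c.2 = d.2 ∧ (c.1 + 1 = d.1 ∨ d.1 + 1 = c.1))

/-- A perfect matching of the cells of `μ` into dominoes. -/
def IsPairing {μ : YoungDiagram} (m : ↥μ.cells → ↥μ.cells) : Prop :=
  ∀ c, m c ≠ c ∧ m (m c) = c ∧ AdjCell (c : ℕ × ℕ) (m c : ℕ × ℕ)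

/-- Standard domino tableau of shape `μ` (with `μ.card = 2n`): a domino tiling
together with a bijective labelling of the dominoes by `[n]`, weakly increasing
along rows and columns. -/
def IsSDT {μ : YoungDiagram} {n : ℕ}
    (T : (↥μ.cells → Fin n) × (↥μ.cells → ↥μ.cells)) : Prop :=
  IsPairing T.2 ∧ (∀ c, T.1 (T.2 c) = T.1 c) ∧
  (∀ c d, T.1 c = T.1 d → d = c ∨ d = T.2 c) ∧
  (∀ c d : ↥μ.cells, (c : ℕ × ℕ).1 = (d : ℕ × ℕ).1 → (c : ℕ × ℕ).2 ≤ (d : ℕ × ℕ).2 →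
      T.1 c ≤ T.1 d) ∧
  (∀ c d : ↥μ.cells, (c : ℕ × ℕ).2 = (d : ℕ × ℕ).2 → (c : ℕ × ℕ).1 ≤ (d : ℕ × ℕ).1 →
      T.1 c ≤ T.1 d)

/-- Descent set of a standard domino tableau: `0` is a descent iff the domino
labelled `1` is vertical; `k ≥ 1` is a descent iff the domino labelled `k+1` lies
strictly below the domino labelled `k`. -/
def desSDT {μ : YoungDiagram} {n : ℕ}
    (T : (↥μ.cells → Fin n) × (↥μ.cells → ↥μ.cells)) : Finset ℕ :=
  (Finset.range n).filter fun k =>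
    (k = 0 ∧ ∃ c : ↥μ.cells, (T.1 c : ℕ) = 0 ∧ ((T.2 c : ℕ × ℕ).2 = (c : ℕ × ℕ).2)) ∨
    (∃ i j : Fin n, (i : ℕ) + 1 = (j : ℕ) ∧ (j : ℕ) = k ∧
      ∀ c d : ↥μ.cells, T.1 c = i → T.1 d = j → (c : ℕ × ℕ).1 < (d : ℕ × ℕ).1)

/-- Number of vertical dominoes of a tiling. -/
def nvert {μ : YoungDiagram} (m : ↥μ.cells → ↥μ.cells) : ℕ :=
  (Finset.univ.filter fun c : ↥μ.cells => (m c : ℕ × ℕ).2 = (c : ℕ × ℕ).2).card / 2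

/-- Semistandard domino tableau with labels in `{0, 1, …, M}`: weakly increasing
along rows, strictly increasing down columns except inside a vertical domino, and
a vertical top-leftmost domino cannot be labelled `0`. -/
def IsSSDT {μ : YoungDiagram} {M : ℕ}
    (T : (↥μ.cells → Fin (M + 1)) × (↥μ.cells → ↥μ.cells)) : Prop :=
  IsPairing T.2 ∧ (∀ c, T.1 (T.2 c) = T.1 c) ∧
  (∀ c d : ↥μ.cells, (c : ℕ × ℕ).1 = (d : ℕ × ℕ).1 → (c : ℕ × ℕ).2 ≤ (d : ℕ × ℕ).2 →
      T.1 c ≤ T.1 d) ∧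
  (∀ c d : ↥μ.cells, (c : ℕ × ℕ).2 = (d : ℕ × ℕ).2 → (c : ℕ × ℕ).1 < (d : ℕ × ℕ).1 →
      (T.1 c < T.1 d ∨ d = T.2 c)) ∧
  (∀ c : ↥μ.cells, (c : ℕ × ℕ) = (0, 0) → (T.2 c : ℕ × ℕ).2 = (c : ℕ × ℕ).2 → T.1 c ≠ 0)

/-- The monomial `X^T` of a semistandard domino tableau: one variable per domino
(choosing the cell of smaller coordinate sum as representative). -/
def dominoMonomial {μ : YoungDiagram} {M : ℕ}
    (T : (↥μ.cells → Fin (M + 1)) × (↥μ.cells → ↥μ.cells)) :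
    MvPolynomial (Fin (M + 1)) ℤ :=
  ∏ c ∈ Finset.univ.filter (fun c : ↥μ.cells =>
      (c : ℕ × ℕ).1 + (c : ℕ × ℕ).2 < (T.2 c : ℕ × ℕ).1 + (T.2 c : ℕ × ℕ).2),
    X (T.1 c)

/-- `q^{sp}` where `sp = v/2` is half the number of vertical dominoes, as an
element of the group algebra `ℤ[q^{ℚ}]`. -/
def qspin (v : ℕ) : AddMonoidAlgebra ℤ ℚ := AddMonoidAlgebra.single ((v : ℚ) / 2) 1

/-- The domino function `G_λ(X; q)`, with `q^{1/2}`-powers recorded in `ℤ[q^ℚ]`. -/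
def Gdom (M : ℕ) (μ : YoungDiagram) :
    MvPolynomial (Fin (M + 1)) (AddMonoidAlgebra ℤ ℚ) :=
  ∑ T ∈ Finset.univ.filter
      (fun T : (↥μ.cells → Fin (M + 1)) × (↥μ.cells → ↥μ.cells) => IsSSDT T),
    C (qspin (nvert T.2)) *
      ∏ c ∈ Finset.univ.filter (fun c : ↥μ.cells =>
          (c : ℕ × ℕ).1 + (c : ℕ × ℕ).2 < (T.2 c : ℕ × ℕ).1 + (T.2 c : ℕ × ℕ).2),
        X (T.1 c)

/-- The domino function `G_λ(X; 1)` at `q = 1`. -/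
def Gdom1 (M : ℕ) (μ : YoungDiagram) : MvPolynomial (Fin (M + 1)) ℤ :=
  ∑ T ∈ Finset.univ.filter
      (fun T : (↥μ.cells → Fin (M + 1)) × (↥μ.cells → ↥μ.cells) => IsSSDT T),
    dominoMonomial T

/-! ### 2-quotient -/

/-- The Young diagram with row lengths `ρ` (cut off at bounds `R, C`); the
definition forces lower-set-ness. -/
def diagramOf (ρ : ℕ → ℕ) (R C : ℕ) : YoungDiagram where
  cells := ((Finset.range R) ×ˢ (Finset.range C)).filter fun c => ∀ i ≤ c.1, c.2 < ρ i
  isLowerSet := by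
    intro a b hba ha
    simp only [Finset.coe_filter, Set.mem_setOf_eq, Finset.mem_product,
      Finset.mem_range] at *
    exact ⟨⟨lt_of_le_of_lt hba.1 ha.1.1, lt_of_le_of_lt hba.2 ha.1.2⟩,
      fun i hi => lt_of_le_of_lt hba.2 (ha.2 i (le_trans hi hba.1))⟩

/-- The pair of row-length functions of the 2-quotient of `μ` (a partition of `2n`),
computed via beta-numbers with `r = 2n + 2` beads: even beta-numbers give the first
component `λ⁻`, odd beta-numbers the second component `λ⁺`. -/
def quotientRows (μ : YoungDiagram) (n : ℕ) : (ℕ → ℕ) × (ℕ → ℕ) :=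
  let r := 2 * n + 2
  let bs := (List.range r).map fun i => μ.rowLen i + (r - 1 - i)
  let od := (bs.filter fun x => x % 2 = 1).insertionSort (· ≥ ·)
  let ev := (bs.filter fun x => x % 2 = 0).insertionSort (· ≥ ·)
  (fun j => ev.getD j 0 / 2 - (ev.length - 1 - j),
   fun j => (od.getD j 0 - 1) / 2 - (od.length - 1 - j))

/-- First component `λ⁻` of the 2-quotient of `μ ∈ P⁰(n)`. -/
def twoQuotMinus (μ : YoungDiagram) (n : ℕ) : YoungDiagram :=
  diagramOf (quotientRows μ n).1 (2 * n + 2) (4 * n + 4)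

/-- Second component `λ⁺` of the 2-quotient of `μ ∈ P⁰(n)`. -/
def twoQuotPlus (μ : YoungDiagram) (n : ℕ) : YoungDiagram :=
  diagramOf (quotientRows μ n).2 (2 * n + 2) (4 * n + 4)

/-- The Schur polynomial on the alphabet `X^* = {x_1, …, x_M}` (no `x_0`),
inside the ring of polynomials on `{x_0, …, x_M}`. -/
def schurStarPoly (M : ℕ) (μ : YoungDiagram) : MvPolynomial (Fin (M + 1)) ℤ :=
  ∑ f ∈ Finset.univ.filter
      (fun f : ↥μ.cells → Fin (M + 1) => IsSSYT f ∧ ∀ c, f c ≠ 0),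
    ∏ c, X (f c)

end

lemma chooseA (m p k : ℕ) :
    (p + k).choose p * (m + p + k).choose (p + k) =
      (m + p).choose p * (m + p + k).choose k := by
  have hpos : 0 < p.factorial * k.factorial * m.factorial :=
    Nat.mul_pos (Nat.mul_pos p.factorial_pos k.factorial_pos) m.factorial_pos
  apply Nat.eq_of_mul_eq_mul_right hpos
  have h1 : (p + k).choose p * p.factorial * k.factorial = (p + k).factorial := by
    have := Nat.choose_mul_factorial_mul_factorial (Nat.le_add_right p k)
    simpa [Nat.add_sub_cancel_left] using this
  have h2 : (m + p + k).choose (p + k) * (p + k).factorial * m.factorial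
      = (m + p + k).factorial := by
    have hle : p + k ≤ m + p + k := by omega
    have := Nat.choose_mul_factorial_mul_factorial hle
    have hsub : m + p + k - (p + k) = m := by omega
    rwa [hsub] at this
  have h3 : (m + p).choose p * p.factorial * m.factorial = (m + p).factorial := by
    have hle : p ≤ m + p := by omega
    have := Nat.choose_mul_factorial_mul_factorial hle
    have hsub : m + p - p = m := by omega
    rwa [hsub] at this
  have h4 : (m + p + k).choose k * k.factorial * (m + p).factorial
      = (m + p + k).factorial := by
    have hle : k ≤ m + p + k := by omega
    have := Nat.choose_mul_factorial_mul_factorial hle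
    have hsub : m + p + k - k = m + p := by omega
    rwa [hsub] at this
  calc (p + k).choose p * (m + p + k).choose (p + k)
        * (p.factorial * k.factorial * m.factorial)
      = (m + p + k).choose (p + k)
        * ((p + k).choose p * p.factorial * k.factorial) * m.factorial := by ring
    _ = (m + p + k).choose (p + k) * (p + k).factorial * m.factorial := by rw [h1]
    _ = (m + p + k).factorial := h2
    _ = (m + p + k).choose k * k.factorial * (m + p).factorial := h4.symm
    _ = (m + p + k).choose k * ((m + p).choose p * p.factorial * m.factorial)
        * k.factorial := by rw [h3]; ring
    _ = (m + p).choose p * (m + p + k).choose k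
        * (p.factorial * k.factorial * m.factorial) := by ring

lemma sumB (p : ℕ) : ∀ m q : ℕ,
    ∑ j ∈ Finset.range (q + 1),
      (-1 : ℤ) ^ j * (p.choose j : ℤ) * (((m + p + (q - j)).choose (q - j) : ℕ) : ℤ)
      = ((m + q).choose q : ℤ) := by
  induction p with
  | zero =>
    intro m q
    rw [Finset.sum_eq_single 0]
    · simp
    · intro j hj hne
      obtain ⟨i, rfl⟩ := Nat.exists_eq_succ_of_ne_zero hne
      simp [Nat.choose_zero_succ]
    · intro h; simp at h
  | succ p ih =>
    intro m q
    rcases Nat.eq_zero_or_pos q with hq | hq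
    · subst hq; simp
    obtain ⟨q', rfl⟩ : ∃ q', q = q' + 1 := ⟨q - 1, by omega⟩
    set q := q' + 1 with hqdef
    rw [Finset.sum_range_succ']
    set G : ℕ → ℤ := fun k =>
      (-1 : ℤ) ^ k * (p.choose k : ℤ) * (((m + 1 + p + (q - k)).choose (q - k) : ℕ) : ℤ)
      with hG
    have key : ∀ j ∈ Finset.range q,
        (-1 : ℤ) ^ (j + 1) * ((p + 1).choose (j + 1) : ℤ)
          * (((m + (p + 1) + (q - (j + 1))).choose (q - (j + 1)) : ℕ) : ℤ)
        = -((-1 : ℤ) ^ j * (p.choose j : ℤ)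
            * (((m + 1 + p + (q' - j)).choose (q' - j) : ℕ) : ℤ)) + G (j + 1) := by
      intro j hj
      simp only [Finset.mem_range] at hj
      have e1 : q - (j + 1) = q' - j := by omega
      have e2 : m + (p + 1) + (q' - j) = m + 1 + p + (q' - j) := by omega
      simp only [hG, Nat.choose_succ_succ, e1, e2]
      push_cast
      ring
    rw [Finset.sum_congr rfl key, Finset.sum_add_distrib]
    have hA : ∑ j ∈ Finset.range q,
        -((-1 : ℤ) ^ j * (p.choose j : ℤ)
            * (((m + 1 + p + (q' - j)).choose (q' - j) : ℕ) : ℤ))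
        = -((m + 1 + q').choose q' : ℤ) := by
      rw [Finset.sum_neg_distrib]
      exact neg_inj.mpr (ih (m + 1) q')
    have hGsum : ∑ j ∈ Finset.range q, G (j + 1)
        = ((m + 1 + q).choose q : ℤ) - G 0 := by
      have h := Finset.sum_range_succ' G q
      have h2 := ih (m + 1) q
      have h3 : ∑ k ∈ Finset.range (q + 1), G k = ((m + 1 + q).choose q : ℤ) := by
        simpa [hG] using h2
      linarith [h, h3]
    rw [hA, hGsum]
    have hG0 : G 0 = (((m + 1 + p + q).choose q : ℕ) : ℤ) := by
      simp [hG]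
    have hF0 : (-1 : ℤ) ^ 0 * ((p + 1).choose 0 : ℤ)
        * (((m + (p + 1) + (q - 0)).choose (q - 0) : ℕ) : ℤ)
        = (((m + 1 + p + q).choose q : ℕ) : ℤ) := by
      have : m + (p + 1) + (q - 0) = m + 1 + p + q := by omega
      rw [this]; simp
    rw [hG0, hF0]
    have hp : ((m + q) + 1).choose (q' + 1)
        = (m + q).choose q' + (m + q).choose (q' + 1) := Nat.choose_succ_succ _ _
    have e4 : m + 1 + q = (m + q) + 1 := by omega
    have e5 : m + 1 + q' = m + q := by omega
    rw [e4, e5, hqdef]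
    rw [hqdef] at hp
    have hp' := congrArg (Nat.cast : ℕ → ℤ) hp
    push_cast at hp' ⊢
    linear_combination (norm := ring_nf) hp'

/-- For nonnegative integers `p, q` and a positive integer `M`,
`C(M+p-1, p) · C(M+q-1, q) = Σ_{j=0}^{p} (-1)^j C(p,j) C(p+q-j, p) C(M+p+q-j-1, p+q-j)`. -/
theorem binomial_product_alternating_sum (p q M : ℕ) (hM : 0 < M) :
    ((M + p - 1).choose p : ℤ) * ((M + q - 1).choose q : ℤ) =
      ∑ j ∈ Finset.range (p + 1),
        (-1 : ℤ) ^ j * (p.choose j : ℤ) * ((p + q - j).choose p : ℤ) *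
          ((M + p + q - j - 1).choose (p + q - j) : ℤ) := by
  obtain ⟨m, rfl⟩ : ∃ m, M = m + 1 := ⟨M - 1, by omega⟩
  have e1 : m + 1 + p - 1 = m + p := by omega
  have e2 : m + 1 + q - 1 = m + q := by omega
  rw [e1, e2]
  set N := min p q with hN
  have T : ℕ → ℤ := fun j => (-1 : ℤ) ^ j * (p.choose j : ℤ) * ((p + q - j).choose p : ℤ) *
      ((m + 1 + p + q - j - 1).choose (p + q - j) : ℤ)
  have h1 : ∑ j ∈ Finset.range (p + 1),
        (-1 : ℤ) ^ j * (p.choose j : ℤ) * ((p + q - j).choose p : ℤ) *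
          ((m + 1 + p + q - j - 1).choose (p + q - j) : ℤ)
      = ∑ j ∈ Finset.range (N + 1),
        (-1 : ℤ) ^ j * (p.choose j : ℤ) * ((p + q - j).choose p : ℤ) *
          ((m + 1 + p + q - j - 1).choose (p + q - j) : ℤ) := by
    symm
    apply Finset.sum_subset
    · exact Finset.range_subset_range.mpr (by omega)
    · intro j hj hnot
      simp only [Finset.mem_range] at hj hnot
      have hjq : q < j := by omega
      have : (p + q - j).choose p = 0 := Nat.choose_eq_zero_of_lt (by omega)
      rw [this]
      push_cast
      ring
  have h2 : ∑ j ∈ Finset.range (q + 1),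
        (-1 : ℤ) ^ j * (p.choose j : ℤ) * (((m + p + (q - j)).choose (q - j) : ℕ) : ℤ)
      = ∑ j ∈ Finset.range (N + 1),
        (-1 : ℤ) ^ j * (p.choose j : ℤ) * (((m + p + (q - j)).choose (q - j) : ℕ) : ℤ) := by
    symm
    apply Finset.sum_subset
    · exact Finset.range_subset_range.mpr (by omega)
    · intro j hj hnot
      simp only [Finset.mem_range] at hj hnot
      have : p.choose j = 0 := Nat.choose_eq_zero_of_lt (by omega)
      rw [this]
      push_cast
      ring
  have h3 : ∀ j ∈ Finset.range (N + 1),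
      (-1 : ℤ) ^ j * (p.choose j : ℤ) * ((p + q - j).choose p : ℤ) *
          ((m + 1 + p + q - j - 1).choose (p + q - j) : ℤ)
      = ((m + p).choose p : ℤ) *
          ((-1 : ℤ) ^ j * (p.choose j : ℤ) * (((m + p + (q - j)).choose (q - j) : ℕ) : ℤ)) := by
    intro j hj
    simp only [Finset.mem_range] at hj
    have hjq : j ≤ q := by omega
    have key := chooseA m p (q - j)
    have e3 : p + (q - j) = p + q - j := by omega
    have e4 : m + p + (q - j) = m + 1 + p + q - j - 1 := by omega
    rw [e3, e4] at key
    have e5 : m + p + (q - j) = m + 1 + p + q - j - 1 := by omega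
    rw [e5]
    have hcast : ((p + q - j).choose p : ℤ) * ((m + 1 + p + q - j - 1).choose (p + q - j) : ℤ)
        = ((m + p).choose p : ℤ) * ((m + 1 + p + q - j - 1).choose (q - j) : ℤ) := by
      exact_mod_cast congrArg (fun n : ℕ => (n : ℤ)) key
    linear_combination ((-1 : ℤ) ^ j * (p.choose j : ℤ)) * hcast
  rw [h1, Finset.sum_congr rfl h3, ← Finset.mul_sum, ← h2, sumB p m q]
end

section
/- For any finite index set and permutations α ∈ S_n, β ∈ S_m written as words, the product of Gessel fundamental quasisymmetric functions F_{Des(α)}(X) * F_{Des(β)}(X) equals the sum over all γ in the shuffle set α ⧢ β of F_{Des(γ)}(X). -/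
open MvPolynomial Finset Equiv

attribute [local instance] Classical.propDecidable

/-! ### auxiliary development -/

section Aux

/-- Chain of consecutive inequalities on an interval gives an inequality. -/
lemma le_of_steps {N : ℕ} {δ : Type*} [Preorder δ] {f : Fin N → δ} {p q : Fin N}
    (hpq : p ≤ q)
    (h : ∀ t t' : Fin N, (t : ℕ) + 1 = t' → p ≤ t → t' ≤ q → f t ≤ f t') :
    f p ≤ f q := by
  obtain ⟨d, hd⟩ : ∃ d, (q : ℕ) = (p : ℕ) + d := ⟨(q : ℕ) - p, by
    have := Fin.le_def.mp hpq; omega⟩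
  clear hpq
  induction d generalizing q with
  | zero =>
    have : q = p := Fin.ext (by omega)
    subst this; exact le_refl _
  | succ d ih =>
    have hq' : (p : ℕ) + d < N := by have := q.isLt; omega
    set q' : Fin N := ⟨(p : ℕ) + d, hq'⟩ with hq'def
    have h1 : f p ≤ f q' := by
      refine ih (fun t t' ht hpt ht'q => h t t' ht hpt ?_) rfl
      exact Fin.le_def.mpr (by have := Fin.le_def.mp ht'q; simp [hq'def] at this ⊢; omega)
    have h2 : f q' ≤ f q := by
      refine h q' q (by simp [hq'def]; omega) (Fin.le_def.mpr (by simp [hq'def])) le_rfl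
    exact h1.trans h2

lemma seqOK_mono {N M : ℕ} {I : Finset ℕ} {g : Fin N → Fin M}
    (hg : seqOK N M I g) : Monotone g :=
  fun _ _ hpq => le_of_steps hpq (fun t t' ht _ _ => (hg t t' ht).1)

lemma mem_desPerm_iff {N : ℕ} (π : Equiv.Perm (Fin N)) {i j : Fin N}
    (hij : (i : ℕ) + 1 = j) : ((j : ℕ) ∈ desPerm π) ↔ π j < π i := by
  unfold desPerm
  simp only [Finset.mem_filter, Finset.mem_range]
  constructor
  · rintro ⟨-, i', j', h1, h2, h3⟩
    have hj : j' = j := Fin.ext h2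
    subst hj
    have hi : i' = i := Fin.ext (by omega)
    subst hi; exact h3
  · intro h; exact ⟨j.isLt, i, j, hij, rfl, h⟩

/-- On a constant stretch of a compatible sequence, the permutation increases. -/
lemma seqOK_desPerm_lt {N M : ℕ} {π : Equiv.Perm (Fin N)} {g : Fin N → Fin M}
    (hg : seqOK N M (desPerm π) g) {p q : Fin N} (hpq : p < q) (he : g p = g q) :
    π p < π q := by
  have hmono : Monotone g := seqOK_mono hg
  have hle : π p ≤ π q := by
    refine le_of_steps hpq.le (fun t t' ht hpt ht'q => ?_)
    have h1 : g t = g t' := by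
      have a1 : g p ≤ g t := hmono hpt
      have a2 : g t ≤ g t' := (hg t t' ht).1
      have a3 : g t' ≤ g q := hmono ht'q
      rw [he] at a1
      exact le_antisymm a2 (a3.trans a1)
    by_contra hlt
    have hdes : ((t' : ℕ) ∈ desPerm π) := (mem_desPerm_iff π ht).mpr (lt_of_not_ge hlt)
    exact absurd ((hg t t' ht).2 hdes) (by rw [h1]; exact lt_irrefl _)
  exact hle.lt_of_ne (fun hne => hpq.ne (π.injective hne))

/-- Inversions of the underlying permutation force strict increase. -/
lemma seqOK_desPerm_strict {N M : ℕ} {π : Equiv.Perm (Fin N)} {g : Fin N → Fin M}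
    (hg : seqOK N M (desPerm π) g) {p q : Fin N} (hpq : p < q) (hinv : π q < π p) :
    g p < g q := by
  have hmono : Monotone g := seqOK_mono hg
  rcases lt_or_eq_of_le (hmono hpq.le) with h | h
  · exact h
  · exact absurd (seqOK_desPerm_lt hg hpq h) (not_lt.2 hinv.le)

end Aux

section Merge

variable {M n m : ℕ} (α : Equiv.Perm (Fin n)) (β : Equiv.Perm (Fin m))

/-- The "label" permutation of `Fin (n+m)`: `α` on the first block, `β` shifted on the second. -/
def labE : Equiv.Perm (Fin (n + m)) :=
  finSumFinEquiv.symm.trans ((α.sumCongr β).trans finSumFinEquiv)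

lemma labE_castAdd (i : Fin n) : labE α β (Fin.castAdd m i) = Fin.castAdd m (α i) := by
  simp [labE]

lemma labE_natAdd (j : Fin m) : labE α β (Fin.natAdd n j) = Fin.natAdd n (β j) := by
  simp [labE]

/-- The "value" function glued from `g` and `h`. -/
def vF (g : Fin n → Fin M) (h : Fin m → Fin M) : Fin (n + m) → Fin M :=
  fun l => Sum.elim g h (finSumFinEquiv.symm l)

lemma vF_castAdd (g : Fin n → Fin M) (h : Fin m → Fin M) (i : Fin n) :
    vF g h (Fin.castAdd m i) = g i := by simp [vF]

lemma vF_natAdd (g : Fin n → Fin M) (h : Fin m → Fin M) (j : Fin m) :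
    vF g h (Fin.natAdd n j) = h j := by simp [vF]

/-- Sorting key: value first, label second. -/
def keyF (g : Fin n → Fin M) (h : Fin m → Fin M) : Fin (n + m) → Fin M ×ₗ Fin (n + m) :=
  fun l => toLex (vF g h l, labE α β l)

lemma keyF_injective (g : Fin n → Fin M) (h : Fin m → Fin M) :
    Function.Injective (keyF α β g h) := by
  intro a b hab
  have : labE α β a = labE α β b := congrArg (fun x => (ofLex x).2) hab
  exact (labE α β).injective this

/-- The sorting permutation of the merged word. -/
def sortP (g : Fin n → Fin M) (h : Fin m → Fin M) : Equiv.Perm (Fin (n + m)) :=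
  Tuple.sort (keyF α β g h)

/-- The shuffle permutation associated to the pair `(g, h)`. -/
def gammaF (g : Fin n → Fin M) (h : Fin m → Fin M) : Equiv.Perm (Fin (n + m)) :=
  (sortP α β g h).trans (labE α β)

/-- The merged compatible sequence. -/
def kF (g : Fin n → Fin M) (h : Fin m → Fin M) : Fin (n + m) → Fin M :=
  fun t => vF g h (sortP α β g h t)

lemma sort_strictMono (g : Fin n → Fin M) (h : Fin m → Fin M) :
    StrictMono (fun t => keyF α β g h (sortP α β g h t)) :=
  (Tuple.monotone_sort (keyF α β g h)).strictMono_of_injective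
    ((keyF_injective α β g h).comp (sortP α β g h).injective)

lemma sort_symm_lt (g : Fin n → Fin M) (h : Fin m → Fin M) {x y : Fin (n + m)}
    (hxy : keyF α β g h x < keyF α β g h y) :
    (sortP α β g h).symm x < (sortP α β g h).symm y := by
  have := (sort_strictMono α β g h).lt_iff_lt
    (a := (sortP α β g h).symm x) (b := (sortP α β g h).symm y)
  rw [Equiv.apply_symm_apply, Equiv.apply_symm_apply] at this
  exact this.mp hxy

lemma keyF_castAdd_lt (g : Fin n → Fin M) (h : Fin m → Fin M)
    (hg : seqOK n M (desPerm α) g) {a b : Fin n} (hab : a < b) :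
    keyF α β g h (Fin.castAdd m a) < keyF α β g h (Fin.castAdd m b) := by
  rw [keyF, keyF, Prod.Lex.lt_iff]
  rcases lt_or_eq_of_le (seqOK_mono hg hab.le) with hlt | heq
  · exact Or.inl (by simpa [vF_castAdd] using hlt)
  · refine Or.inr ⟨by simpa [vF_castAdd] using heq, ?_⟩
    rw [labE_castAdd, labE_castAdd]
    exact Fin.lt_def.mpr (by simpa using Fin.lt_def.mp (seqOK_desPerm_lt hg hab heq))

lemma keyF_natAdd_lt (g : Fin n → Fin M) (h : Fin m → Fin M)
    (hh : seqOK m M (desPerm β) h) {a b : Fin m} (hab : a < b) :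
    keyF α β g h (Fin.natAdd n a) < keyF α β g h (Fin.natAdd n b) := by
  rw [keyF, keyF, Prod.Lex.lt_iff]
  rcases lt_or_eq_of_le (seqOK_mono hh hab.le) with hlt | heq
  · exact Or.inl (by simpa [vF_natAdd] using hlt)
  · refine Or.inr ⟨by simpa [vF_natAdd] using heq, ?_⟩
    rw [labE_natAdd, labE_natAdd]
    exact Fin.lt_def.mpr (by simpa using Fin.lt_def.mp (seqOK_desPerm_lt hh hab heq))

lemma forward_shuffle (g : Fin n → Fin M) (h : Fin m → Fin M)
    (hg : seqOK n M (desPerm α) g) (hh : seqOK m M (desPerm β) h) :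
    IsShuffle α β (gammaF α β g h) := by
  refine ⟨fun i => (sortP α β g h).symm (Fin.castAdd m i),
    fun j => (sortP α β g h).symm (Fin.natAdd n j), ?_, ?_, ?_, ?_, ?_⟩
  · intro a b hab
    exact sort_symm_lt α β g h (keyF_castAdd_lt α β g h hg hab)
  · intro a b hab
    exact sort_symm_lt α β g h (keyF_natAdd_lt α β g h hh hab)
  · intro i
    simp [gammaF, Equiv.trans_apply, sortP, labE_castAdd]
  · intro j
    simp [gammaF, Equiv.trans_apply, sortP, labE_natAdd]
  · intro t
    rcases hc : finSumFinEquiv.symm (sortP α β g h t) with i | j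
    · left
      refine ⟨i, ?_⟩
      have h1 : sortP α β g h t = Fin.castAdd m i := by
        have := congrArg finSumFinEquiv hc
        rwa [Equiv.apply_symm_apply, finSumFinEquiv_apply_left] at this
      exact (Equiv.symm_apply_eq _).mpr h1.symm
    · right
      refine ⟨j, ?_⟩
      have h1 : sortP α β g h t = Fin.natAdd n j := by
        have := congrArg finSumFinEquiv hc
        rwa [Equiv.apply_symm_apply, finSumFinEquiv_apply_right] at this
      exact (Equiv.symm_apply_eq _).mpr h1.symm

lemma forward_seqOK (g : Fin n → Fin M) (h : Fin m → Fin M) :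
    seqOK (n + m) M (desPerm (gammaF α β g h)) (kF α β g h) := by
  intro t t' ht
  have htt : t < t' := Fin.lt_def.mpr (by omega)
  have hkey := sort_strictMono α β g h htt
  simp only [keyF] at hkey
  rw [Prod.Lex.lt_iff] at hkey
  constructor
  · rcases hkey with h1 | ⟨h1, _⟩
    · exact le_of_lt h1
    · exact le_of_eq h1
  · intro hdes
    have hlt : gammaF α β g h t' < gammaF α β g h t :=
      (mem_desPerm_iff (gammaF α β g h) ht).mp hdes
    rcases hkey with h1 | ⟨_, h2⟩
    · exact h1
    · simp only [gammaF, Equiv.trans_apply] at hlt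
      exact absurd hlt (not_lt.2 h2.le)

lemma monomial_eq (g : Fin n → Fin M) (h : Fin m → Fin M) :
    ((∏ i, MvPolynomial.X (g i)) * ∏ j, MvPolynomial.X (h j) :
        MvPolynomial (Fin M) ℤ) = ∏ t, MvPolynomial.X (kF α β g h t) := by
  have e1 : (∏ t, MvPolynomial.X (kF α β g h t) : MvPolynomial (Fin M) ℤ)
      = ∏ l, MvPolynomial.X (vF g h l) :=
    Equiv.prod_comp (sortP α β g h) (fun l => MvPolynomial.X (vF g h l))
  have e2 : (∏ l, MvPolynomial.X (vF g h l) : MvPolynomial (Fin M) ℤ)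
      = ∏ s : Fin n ⊕ Fin m, MvPolynomial.X (vF g h (finSumFinEquiv s)) :=
    (Equiv.prod_comp finSumFinEquiv (fun l => MvPolynomial.X (vF g h l))).symm
  rw [e1, e2]
  rw [Fintype.prod_sum_type]
  simp [vF]

/-- Canonical φ determined by a shuffle. -/
def phiG (γ : Equiv.Perm (Fin (n + m))) : Fin n → Fin (n + m) :=
  fun i => γ.symm (Fin.castAdd m (α i))

def psiG (γ : Equiv.Perm (Fin (n + m))) : Fin m → Fin (n + m) :=
  fun j => γ.symm (Fin.natAdd n (β j))

lemma shuffle_witness_eq {γ : Equiv.Perm (Fin (n + m))} (hγ : IsShuffle α β γ) :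
    (∀ a b : Fin n, a < b → phiG α γ a < phiG α γ b) ∧
    (∀ a b : Fin m, a < b → psiG β γ a < psiG β γ b) ∧
    (∀ t, (∃ i, phiG α γ i = t) ∨ (∃ j, psiG β γ j = t)) := by
  obtain ⟨φ, ψ, h1, h2, h3, h4, h5⟩ := hγ
  have hφ : ∀ i, φ i = phiG α γ i := by
    intro i
    have : γ (φ i) = Fin.castAdd m (α i) := Fin.ext (by simpa using h3 i)
    rw [phiG, ← this, Equiv.symm_apply_apply]
  have hψ : ∀ j, ψ j = psiG β γ j := by
    intro j
    have : γ (ψ j) = Fin.natAdd n (β j) := Fin.ext (by simpa using h4 j)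
    rw [psiG, ← this, Equiv.symm_apply_apply]
  refine ⟨fun a b hab => ?_, fun a b hab => ?_, fun t => ?_⟩
  · rw [← hφ, ← hφ]; exact h1 a b hab
  · rw [← hψ, ← hψ]; exact h2 a b hab
  · rcases h5 t with ⟨i, hi⟩ | ⟨j, hj⟩
    · exact Or.inl ⟨i, by rw [← hφ]; exact hi⟩
    · exact Or.inr ⟨j, by rw [← hψ]; exact hj⟩

lemma backward_g_mem {γ : Equiv.Perm (Fin (n + m))} {k : Fin (n + m) → Fin M}
    (hγ : IsShuffle α β γ) (hk : seqOK (n + m) M (desPerm γ) k) :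
    seqOK n M (desPerm α) (fun i => k (phiG α γ i)) := by
  obtain ⟨hφ, -, -⟩ := shuffle_witness_eq α β hγ
  intro i j hij
  have hij' : i < j := Fin.lt_def.mpr (by omega)
  have hlt := hφ i j hij'
  refine ⟨seqOK_mono hk hlt.le, fun hdes => ?_⟩
  have hα : α j < α i := (mem_desPerm_iff α hij).mp hdes
  have hγlt : γ (phiG α γ j) < γ (phiG α γ i) := by
    rw [phiG, phiG, Equiv.apply_symm_apply, Equiv.apply_symm_apply]
    exact Fin.lt_def.mpr (by simpa using Fin.lt_def.mp hα)
  exact seqOK_desPerm_strict hk hlt hγlt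

lemma backward_h_mem {γ : Equiv.Perm (Fin (n + m))} {k : Fin (n + m) → Fin M}
    (hγ : IsShuffle α β γ) (hk : seqOK (n + m) M (desPerm γ) k) :
    seqOK m M (desPerm β) (fun j => k (psiG β γ j)) := by
  obtain ⟨-, hψ, -⟩ := shuffle_witness_eq α β hγ
  intro i j hij
  have hij' : i < j := Fin.lt_def.mpr (by omega)
  have hlt := hψ i j hij'
  refine ⟨seqOK_mono hk hlt.le, fun hdes => ?_⟩
  have hβ : β j < β i := (mem_desPerm_iff β hij).mp hdes
  have hγlt : γ (psiG β γ j) < γ (psiG β γ i) := by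
    rw [psiG, psiG, Equiv.apply_symm_apply, Equiv.apply_symm_apply]
    exact Fin.lt_def.mpr (by simpa using Fin.lt_def.mp hβ)
  exact seqOK_desPerm_strict hk hlt hγlt

/-- Left inverse: recovering `(g, h)` from the merged data. -/
lemma left_inv_g (g : Fin n → Fin M) (h : Fin m → Fin M) (i : Fin n) :
    kF α β g h (phiG α (gammaF α β g h) i) = g i := by
  have h1 : (gammaF α β g h).symm (Fin.castAdd m (α i))
      = (sortP α β g h).symm (Fin.castAdd m i) := by
    apply (gammaF α β g h).injective
    rw [Equiv.apply_symm_apply, gammaF, Equiv.trans_apply, Equiv.apply_symm_apply,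
      labE_castAdd]
  rw [phiG, h1, kF, Equiv.apply_symm_apply, vF_castAdd]

lemma left_inv_h (g : Fin n → Fin M) (h : Fin m → Fin M) (j : Fin m) :
    kF α β g h (psiG β (gammaF α β g h) j) = h j := by
  have h1 : (gammaF α β g h).symm (Fin.natAdd n (β j))
      = (sortP α β g h).symm (Fin.natAdd n j) := by
    apply (gammaF α β g h).injective
    rw [Equiv.apply_symm_apply, gammaF, Equiv.trans_apply, Equiv.apply_symm_apply,
      labE_natAdd]
  rw [psiG, h1, kF, Equiv.apply_symm_apply, vF_natAdd]

/-- Right inverse computations. -/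
lemma vF_back {γ : Equiv.Perm (Fin (n + m))} {k : Fin (n + m) → Fin M} (t : Fin (n + m)) :
    vF (fun i => k (phiG α γ i)) (fun j => k (psiG β γ j)) ((labE α β).symm (γ t)) = k t := by
  rcases hc : finSumFinEquiv.symm ((labE α β).symm (γ t)) with i | j
  · have h1 : (labE α β).symm (γ t) = Fin.castAdd m i := by
      have := congrArg finSumFinEquiv hc
      rwa [Equiv.apply_symm_apply, finSumFinEquiv_apply_left] at this
    have h2 : γ t = Fin.castAdd m (α i) := by
      have := congrArg (labE α β) h1
      rwa [Equiv.apply_symm_apply, labE_castAdd] at this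
    have h3 : phiG α γ i = t := by rw [phiG, ← h2, Equiv.symm_apply_apply]
    rw [h1, vF_castAdd, h3]
  · have h1 : (labE α β).symm (γ t) = Fin.natAdd n j := by
      have := congrArg finSumFinEquiv hc
      rwa [Equiv.apply_symm_apply, finSumFinEquiv_apply_right] at this
    have h2 : γ t = Fin.natAdd n (β j) := by
      have := congrArg (labE α β) h1
      rwa [Equiv.apply_symm_apply, labE_natAdd] at this
    have h3 : psiG β γ j = t := by rw [psiG, ← h2, Equiv.symm_apply_apply]
    rw [h1, vF_natAdd, h3]

lemma sort_back {γ : Equiv.Perm (Fin (n + m))} {k : Fin (n + m) → Fin M}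
    (hγ : IsShuffle α β γ) (hk : seqOK (n + m) M (desPerm γ) k) :
    sortP α β (fun i => k (phiG α γ i)) (fun j => k (psiG β γ j))
      = γ.trans (labE α β).symm := by
  set g := fun i => k (phiG α γ i)
  set h := fun j => k (psiG β γ j)
  symm
  rw [sortP, Tuple.eq_sort_iff]
  constructor
  · intro p q hpq
    refine le_of_steps hpq (fun t t' ht _ _ => ?_)
    have hkv : ∀ u : Fin (n + m), keyF α β g h ((γ.trans (labE α β).symm) u)
        = toLex (k u, γ u) := by
      intro u
      rw [keyF]
      congr 1
      refine Prod.ext ?_ ?_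
      · exact vF_back α β u
      · simp [Equiv.trans_apply]
    rw [Function.comp_apply, Function.comp_apply, hkv, hkv]
    have htt : t < t' := Fin.lt_def.mpr (by omega)
    rcases lt_or_eq_of_le (hk t t' ht).1 with hlt | heq
    · exact le_of_lt ((Prod.Lex.lt_iff).mpr (Or.inl hlt))
    · exact le_of_lt ((Prod.Lex.lt_iff).mpr
        (Or.inr ⟨heq, seqOK_desPerm_lt hk htt heq⟩))
  · intro p q hpq hf
    exact absurd ((γ.trans (labE α β).symm).injective (keyF_injective α β g h hf)) hpq.ne

lemma right_inv_gamma {γ : Equiv.Perm (Fin (n + m))} {k : Fin (n + m) → Fin M}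
    (hγ : IsShuffle α β γ) (hk : seqOK (n + m) M (desPerm γ) k) :
    gammaF α β (fun i => k (phiG α γ i)) (fun j => k (psiG β γ j)) = γ := by
  rw [gammaF, sort_back α β hγ hk]
  ext t
  simp [Equiv.trans_apply]

lemma right_inv_k {γ : Equiv.Perm (Fin (n + m))} {k : Fin (n + m) → Fin M}
    (hγ : IsShuffle α β γ) (hk : seqOK (n + m) M (desPerm γ) k) :
    kF α β (fun i => k (phiG α γ i)) (fun j => k (psiG β γ j)) = k := by
  funext t
  rw [kF, sort_back α β hγ hk]
  simpa [Equiv.trans_apply] using vF_back (γ := γ) (k := k) α β t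

end Merge

/-- `F_{Des(α)}(X) · F_{Des(β)}(X) = Σ_{γ ∈ α ⧢ β} F_{Des(γ)}(X)`. -/
theorem Fqsym_product_shuffle (M n m : ℕ) (α : Equiv.Perm (Fin n)) (β : Equiv.Perm (Fin m)) :
    Fqsym M n (desPerm α) * Fqsym M m (desPerm β) =
      ∑ γ ∈ Finset.univ.filter (fun γ : Equiv.Perm (Fin (n + m)) => IsShuffle α β γ),
        Fqsym M (n + m) (desPerm γ) := by
  unfold Fqsym
  rw [Finset.sum_mul_sum]
  rw [← Finset.sum_product']
  rw [Finset.sum_sigma']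
  refine Finset.sum_nbij'
    (fun p => ⟨gammaF α β p.1 p.2, kF α β p.1 p.2⟩)
    (fun x => (fun i => x.2 (phiG α x.1 i), fun j => x.2 (psiG β x.1 j)))
    ?_ ?_ ?_ ?_ ?_
  · rintro ⟨g, h⟩ hp
    rw [Finset.mem_product, Finset.mem_filter, Finset.mem_filter] at hp
    rw [Finset.mem_sigma, Finset.mem_filter, Finset.mem_filter]
    exact ⟨⟨Finset.mem_univ _, forward_shuffle α β g h hp.1.2 hp.2.2⟩,
      Finset.mem_univ _, forward_seqOK α β g h⟩
  · rintro ⟨γ, k⟩ hx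
    rw [Finset.mem_sigma, Finset.mem_filter, Finset.mem_filter] at hx
    rw [Finset.mem_product, Finset.mem_filter, Finset.mem_filter]
    exact ⟨⟨Finset.mem_univ _, backward_g_mem α β hx.1.2 hx.2.2⟩,
      Finset.mem_univ _, backward_h_mem α β hx.1.2 hx.2.2⟩
  · rintro ⟨g, h⟩ hp
    refine Prod.ext ?_ ?_
    · funext i; exact left_inv_g α β g h i
    · funext j; exact left_inv_h α β g h j
  · rintro ⟨γ, k⟩ hx
    rw [Finset.mem_sigma, Finset.mem_filter, Finset.mem_filter] at hx
    have h1 := right_inv_gamma α β hx.1.2 hx.2.2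
    have h2 := right_inv_k α β hx.1.2 hx.2.2
    refine Sigma.ext ?_ (heq_of_eq ?_)
    · exact h1
    · exact h2
  · rintro ⟨g, h⟩ hp
    exact monomial_eq α β g h
end

section
/- For a coloured permutation π in S_n^{(p)} (the overlined letters appear in increasing order), the generating function Γ(π) of P_π-partitions equals the weak composition fundamental quasisymmetric function F̃_{comp(π)}(X). -/
open MvPolynomial Finset Equiv

attribute [local instance] Classical.propDecidable

lemma wcDesAux_cons (s : ℕ) (rest : List ℕ) (c : ℕ) :
    wcDesAux (s :: rest) c =
      if s = 0 then wcDesAux rest (c + 1) else (c + s) :: wcDesAux rest (c + s) := rfl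

lemma compC_ff (v u : ℕ) (r' : List (Bool × ℕ)) :
    compC ((false, v) :: (false, u) :: r') =
      if v < u then
        match compC ((false, u) :: r') with
        | [] => [1]
        | s :: t => (s + 1) :: t
      else 1 :: compC ((false, u) :: r') := rfl

lemma compC_ft (v : ℕ) (x : Bool × ℕ) (r' : List (Bool × ℕ)) (hx : x.1 = true) :
    compC ((false, v) :: x :: r') = 1 :: compC (x :: r') := by
  obtain ⟨b, u⟩ := x; cases b
  · simp at hx
  · rfl

lemma wcDesAux_shift (α : List ℕ) : ∀ c, wcDesAux α c = (wcDesAux α 0).map (· + c) := by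
  induction α with
  | nil => intro c; simp [wcDesAux]
  | cons s rest ih =>
    intro c
    by_cases hs : s = 0
    · rw [wcDesAux_cons, if_pos hs, wcDesAux_cons, if_pos hs, ih (c + 1), ih (0 + 1),
        List.map_map]
      congr 1; funext x; simp; omega
    · rw [wcDesAux_cons, if_neg hs, wcDesAux_cons, if_neg hs, ih (c + s), ih (0 + s),
        List.map_cons, List.map_map]
      refine congrArg₂ List.cons (by omega) ?_
      congr 1; funext x; simp [Function.comp]; omega

lemma wcDesAux_pos (α : List ℕ) : ∀ c x, x ∈ wcDesAux α c → c < x := by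
  induction α with
  | nil => simp [wcDesAux]
  | cons s rest ih =>
    intro c x hx
    by_cases hs : s = 0
    · rw [wcDesAux_cons, if_pos hs] at hx
      have := ih (c + 1) x hx; omega
    · rw [wcDesAux_cons, if_neg hs, List.mem_cons] at hx
      rcases hx with h | h
      · omega
      · have := ih (c + s) x h; omega

lemma compC_false_cons (v : ℕ) (r : List (Bool × ℕ)) :
    ∃ s t, compC ((false, v) :: r) = (s + 1) :: t := by
  match r with
  | [] => exact ⟨0, compC [], rfl⟩
  | (true, u) :: r' => exact ⟨0, compC ((true, u) :: r'), rfl⟩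
  | (false, u) :: r' =>
    by_cases h : v < u
    · cases hc : compC ((false, u) :: r') with
      | nil => exact ⟨0, [], by rw [compC_ff, if_pos h, hc]⟩
      | cons s t => exact ⟨s, t, by rw [compC_ff, if_pos h, hc]⟩
    · exact ⟨0, compC ((false, u) :: r'), by rw [compC_ff, if_neg h]⟩

lemma wcSlots_cons (s : ℕ) (t : List ℕ) :
    wcSlots (s :: t) = (if s = 0 then [0] else List.replicate s 1) ++ wcSlots t := by
  simp [wcSlots]

lemma wcSlots_compC (w : List (Bool × ℕ)) :
    wcSlots (compC w) = w.map fun x => if x.1 then 0 else 1 := by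
  induction w with
  | nil => rfl
  | cons a rest ih =>
    obtain ⟨b, v⟩ := a
    cases b with
    | true =>
      show wcSlots (0 :: compC rest) = _
      rw [wcSlots_cons]; simp [ih]
    | false =>
      match rest with
      | [] => rfl
      | (true, u) :: r' =>
        rw [compC_ft v (true, u) r' rfl, wcSlots_cons]
        simp [ih]
      | (false, u) :: r' =>
        by_cases h : v < u
        · obtain ⟨s, t, hst⟩ := compC_false_cons u r'
          have hc : compC ((false, v) :: (false, u) :: r') = (s + 1 + 1) :: t := by
            rw [compC_ff, if_pos h, hst]
          rw [hc, wcSlots_cons]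
          have h1 : (if s + 1 + 1 = 0 then [0] else List.replicate (s + 1 + 1) 1) ++ wcSlots t
              = 1 :: wcSlots ((s + 1) :: t) := by
            rw [wcSlots_cons]
            simp [List.replicate_succ]
          rw [h1, ← hst, ih]
          simp
        · rw [compC_ff, if_neg h, wcSlots_cons]
          simp [ih]

lemma mem_map_add_one (S : List ℕ) (k : ℕ) : (k + 1) ∈ S.map (· + 1) ↔ k ∈ S := by
  simp only [List.mem_map]
  constructor
  · rintro ⟨b, hb, h⟩
    have : b = k := by omega
    subst this; exact hb
  · exact fun h => ⟨k, h, rfl⟩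

lemma mem_wcDesAux_compC (w : List (Bool × ℕ)) : ∀ k : ℕ,
    (k + 1) ∈ wcDesAux (compC w) 0 ↔
      ∃ x, w[k]? = some x ∧ x.1 = false ∧
        ∀ y, w[k + 1]? = some y → y.1 = true ∨ ¬ x.2 < y.2 := by
  induction w with
  | nil => intro k; simp [compC, wcDesAux]
  | cons a rest ih =>
    obtain ⟨b, v⟩ := a
    cases b with
    | true =>
      intro k
      have hL : wcDesAux (compC ((true, v) :: rest)) 0
          = (wcDesAux (compC rest) 0).map (· + 1) := by
        show wcDesAux (0 :: compC rest) 0 = _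
        rw [wcDesAux_cons, if_pos rfl, wcDesAux_shift]
      rw [hL]
      cases k with
      | zero =>
        constructor
        · intro hb
          rw [mem_map_add_one] at hb
          have := wcDesAux_pos _ 0 0 hb; omega
        · rintro ⟨x, hx, hx1, -⟩
          simp only [List.getElem?_cons_zero, Option.some_inj] at hx
          rw [← hx] at hx1; simp at hx1
      | succ k' =>
        rw [show k' + 1 + 1 = (k' + 1) + 1 from rfl, mem_map_add_one]
        simpa only [List.getElem?_cons_succ] using ih k'
    | false =>
      match rest with
      | [] =>
        intro k
        have hL : wcDesAux (compC [(false, v)]) 0 = [1] := by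
          show wcDesAux [1] 0 = [1]
          rw [wcDesAux_cons]; simp [wcDesAux]
        rw [hL]
        cases k with
        | zero => simp
        | succ k' => simp
      | (true, u) :: r' =>
        intro k
        have hL : wcDesAux (compC ((false, v) :: (true, u) :: r')) 0
            = 1 :: (wcDesAux (compC ((true, u) :: r')) 0).map (· + 1) := by
          rw [compC_ft v (true, u) r' rfl, wcDesAux_cons]
          norm_num
          rw [wcDesAux_shift]
        rw [hL]
        cases k with
        | zero => simp
        | succ k' =>
          rw [List.mem_cons, show k' + 1 + 1 = (k' + 1) + 1 from rfl, mem_map_add_one]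
          have : ¬ (k' + 1 + 1 = 1) := by omega
          simp only [this, false_or]
          simpa only [List.getElem?_cons_succ] using ih k'
      | (false, u) :: r' =>
        intro k
        by_cases h : v < u
        · obtain ⟨s, t, hst⟩ := compC_false_cons u r'
          have hc : compC ((false, v) :: (false, u) :: r') = (s + 1 + 1) :: t := by
            rw [compC_ff, if_pos h, hst]
          have hL : (k + 1) ∈ wcDesAux (compC ((false, v) :: (false, u) :: r')) 0
              ↔ k ∈ wcDesAux (compC ((false, u) :: r')) 0 := by
            rw [hc, hst, wcDesAux_cons, wcDesAux_cons]
            norm_num [List.mem_cons]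
            rw [wcDesAux_shift t (s + 1 + 1), wcDesAux_shift t (s + 1)]
            simp only [List.mem_map]
            constructor
            · rintro (h1 | ⟨b, hb, h2⟩)
              · left; omega
              · right; exact ⟨b, hb, by omega⟩
            · rintro (h1 | ⟨b, hb, h2⟩)
              · left; omega
              · right; exact ⟨b, hb, by omega⟩
          rw [hL]
          cases k with
          | zero =>
            constructor
            · intro hb
              have := wcDesAux_pos _ 0 0 hb; omega
            · rintro ⟨x, hx, hx1, hy⟩
              simp only [List.getElem?_cons_zero, Option.some_inj] at hx
              have := hy (false, u) (by simp)
              rw [← hx] at this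
              simp [h] at this
          | succ k' =>
            simpa only [List.getElem?_cons_succ] using ih k'
        · have hL : wcDesAux (compC ((false, v) :: (false, u) :: r')) 0
              = 1 :: (wcDesAux (compC ((false, u) :: r')) 0).map (· + 1) := by
            rw [compC_ff, if_neg h, wcDesAux_cons]
            norm_num
            rw [wcDesAux_shift]
          rw [hL]
          cases k with
          | zero => simp [h]; omega
          | succ k' =>
            rw [List.mem_cons, show k' + 1 + 1 = (k' + 1) + 1 from rfl, mem_map_add_one]
            have : ¬ (k' + 1 + 1 = 1) := by omega
            simp only [this, false_or]
            simpa only [List.getElem?_cons_succ] using ih k'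

/-- For a coloured permutation `π ∈ S_n^{(p)}` (letters with
distinct absolute values in `[l]`, overlined letters appearing in increasing
order), the `P_π`-partition generating function equals the weak composition
fundamental quasisymmetric function: `Γ(π) = F̃_{comp(π)}(X)`. -/
theorem Gamma_eq_wcF (M : ℕ) (w : List (Bool × ℕ))
    (hvals : ∀ x ∈ w, 1 ≤ x.2 ∧ x.2 ≤ w.length)
    (hnd : (w.map Prod.snd).Nodup)
    (hover : ((w.filter fun x => x.1).map Prod.snd).Pairwise (· < ·)) :
    GammaC M w = wcF M (compC w) := by
  classical
  have hA := wcSlots_compC w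
  have hlen : (wcSlots (compC w)).length = w.length := by rw [hA, List.length_map]
  have hpair : ∀ i j : ℕ, ∀ _hi : i < w.length, ∀ _hj : j < w.length, i < j →
      w[i].1 = true → w[j].1 = true → w[i].2 < w[j].2 := by
    have hp : List.Pairwise (fun a b : Bool × ℕ => a.1 = true → b.1 = true → a.2 < b.2) w := by
      have h1 := hover
      rw [List.pairwise_map] at h1
      rw [← List.pairwise_filter]
      simpa using h1
    intro i j hi hj hij
    exact List.pairwise_iff_getElem.mp hp i j hi hj hij
  have hinj : ∀ i j : ℕ, ∀ _hi : i < w.length, ∀ _hj : j < w.length, i ≠ j →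
      w[i].2 ≠ w[j].2 := by
    intro i j hi hj hij
    have hm : ∀ (k : ℕ) (hk : k < w.length), (w.map Prod.snd)[k]'(by simpa using hk) = w[k].2 := by
      intro k hk; simp
    rcases Nat.lt_or_ge i j with h | h
    · have := List.pairwise_iff_getElem.mp hnd i j (by simpa using hi) (by simpa using hj) h
      rw [hm i hi, hm j hj] at this; exact this
    · have hji : j < i := by omega
      have := List.pairwise_iff_getElem.mp hnd j i (by simpa using hj) (by simpa using hi) hji
      rw [hm i hi, hm j hj] at this; exact fun he => this he.symm
  have hdes : ∀ i j : Fin w.length, (i : ℕ) + 1 = (j : ℕ) →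
      ((j : ℕ) ∈ wcDes (compC w) ↔ cOrd w.length (w.get j) < cOrd w.length (w.get i)) := by
    intro i j hij
    simp only [List.get_eq_getElem]
    have hwi : w[(i : ℕ)]? = some (w[(i : ℕ)]) := List.getElem?_eq_getElem i.isLt
    have hwj : w[(i : ℕ) + 1]? = some (w[(j : ℕ)]'j.isLt) := by
      rw [hij]; exact List.getElem?_eq_getElem j.isLt
    have hvi := hvals (w[(i : ℕ)]) (List.getElem_mem i.isLt)
    have hvj := hvals (w[(j : ℕ)]'j.isLt) (List.getElem_mem j.isLt)
    have hne : (w[(i : ℕ)]).2 ≠ (w[(j : ℕ)]'j.isLt).2 := hinj _ _ i.isLt j.isLt (by omega)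
    rw [wcDes, List.mem_toFinset]
    conv_lhs => rw [← hij]
    rw [mem_wcDesAux_compC]
    constructor
    · rintro ⟨x, hx, hx1, hy⟩
      rw [hwi, Option.some_inj] at hx
      subst hx
      have hyj := hy (w[(j : ℕ)]'j.isLt) hwj
      cases hwjf : (w[(j : ℕ)]'j.isLt).1 with
      | true => simp [cOrd, hwjf, hx1]; omega
      | false =>
        rcases hyj with h | h
        · rw [hwjf] at h; exact absurd h (by simp)
        · simp [cOrd, hwjf, hx1]; omega
    · intro hlt
      have hx1 : (w[(i : ℕ)]).1 = false := by
        by_contra hc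
        have hc' : (w[(i : ℕ)]).1 = true := by
          cases hb : (w[(i : ℕ)]).1 with
          | true => rfl
          | false => exact absurd hb hc
        cases hwjf : (w[(j : ℕ)]'j.isLt).1 with
        | true =>
          have h2 := hpair (i : ℕ) (j : ℕ) i.isLt j.isLt (by omega) hc' hwjf
          simp [cOrd, hc', hwjf] at hlt
          omega
        | false =>
          simp [cOrd, hc', hwjf] at hlt
          omega
      refine ⟨w[(i : ℕ)], hwi, hx1, ?_⟩
      intro y hy
      rw [hwj, Option.some_inj] at hy
      subst hy
      cases hwjf : (w[(j : ℕ)]'j.isLt).1 with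
      | true => left; rfl
      | false =>
        right
        simp [cOrd, hx1, hwjf] at hlt
        omega
  rw [GammaC, wcF]
  refine Finset.sum_nbij' (i := fun f => f ∘ Fin.cast hlen) (j := fun g => g ∘ Fin.cast hlen.symm)
    ?_ ?_ (fun _ _ => rfl) (fun _ _ => rfl) ?_
  · intro f hf
    simp only [Finset.mem_filter, Finset.mem_univ, true_and] at hf ⊢
    intro i j hij
    have hij' : ((Fin.cast hlen i : Fin w.length) : ℕ) + 1
        = ((Fin.cast hlen j : Fin w.length) : ℕ) := by simpa using hij
    have h := hf (Fin.cast hlen i) (Fin.cast hlen j) hij'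
    refine ⟨h.1, fun hmem => h.2 ?_⟩
    exact (hdes _ _ hij').mp (by simpa using hmem)
  · intro g hg
    simp only [Finset.mem_filter, Finset.mem_univ, true_and] at hg ⊢
    intro i j hij
    have hij' : ((Fin.cast hlen.symm i : Fin (wcSlots (compC w)).length) : ℕ) + 1
        = ((Fin.cast hlen.symm j : Fin (wcSlots (compC w)).length) : ℕ) := by simpa using hij
    have h := hg (Fin.cast hlen.symm i) (Fin.cast hlen.symm j) hij'
    refine ⟨h.1, fun hlt => h.2 ?_⟩
    have h3 := (hdes i j hij).mpr hlt
    simpa using h3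
  · intro f _
    refine Fintype.prod_equiv (finCongr hlen.symm) _ _ ?_
    intro x
    have hx : (wcSlots (compC w)).get (finCongr hlen.symm x)
        = (if (w.get x).1 then 0 else 1) := by
      simp only [List.get_eq_getElem, hA, List.getElem_map, finCongr_apply, Fin.coe_cast]
    rw [hx]
    rfl
end
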